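/- Let ω be a primitive cube root of unity in ℂ. Then as an identity of formal power series in three commuting variables x, y, t over ℂ: (1/3) Σ_{i=0}^{2} (1 + ω^i x y t⁶)/((1 − x t²)(1 − ω^i y t²)(1 − y² t⁴)(1 − x² t⁸)) = (1 − x² y⁶ t²⁰)/((1 − x t²)(1 − y² t⁴)(1 − y³ t⁶)(1 − x² t⁸)(1 − x y³ t¹⁰)). -/

import Mathlib

/-!
Writing `z = y t²`, the numerator of the `i`-th summand is `1 + ωⁱ (x t⁴) z`, and
`(1 - ωⁱ z)⁻¹ = (1 + ωⁱ z + ω²ⁱ z²) / (1 - z³)`. Averaging over `i` keeps exactly the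
monomials whose power of `ω` is a multiple of `3`, so the `ℤ₃` average of the `z`-dependent
factor is `(1 + x y³ t¹⁰) / (1 - y³ t⁶)`. On the other side `1 - x² y⁶ t²⁰` factors as
`(1 - x y³ t¹⁰) (1 + x y³ t¹⁰)`, and the first factor cancels.
-/

open Finset

theorem cube_root_multisection {R : Type*} [CommRing R] {W : R} (hW : 1 + W + W ^ 2 = 0)
    (c z : R) :
    ∑ i ∈ range 3, (1 + W ^ i * (c * z)) * ∑ j ∈ range 3, (W ^ i * z) ^ j =
      3 * (1 + c * z ^ 3) := by
  simp only [sum_range_succ, sum_range_zero]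
  -- `1 + W² + W⁴` and `W³ + W⁶ - 2` are both multiples of `1 + W + W²`
  linear_combination
    (z + c * z + (z ^ 2 + c * z ^ 2) * (1 - W + W ^ 2) + c * z ^ 3 * (W - 1) * (W ^ 3 + 2)) * hW

namespace MvPowerSeries

variable {σ k : Type*} [Field k]

theorem inv_one_sub_eq_geom_sum_mul_inv {a : MvPowerSeries σ k} (ha : constantCoeff a = 0)
    {n : ℕ} (hn : n ≠ 0) : (1 - a)⁻¹ = (∑ i ∈ range n, a ^ i) * (1 - a ^ n)⁻¹ := by
  rw [MvPowerSeries.inv_eq_iff_mul_eq_one (by simp [ha]), mul_right_comm, geom_sum_mul_neg]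
  exact MvPowerSeries.mul_inv_cancel _ (by simp [ha, hn])

theorem cube_root_multisection_inv {ω : k} (hω : IsPrimitiveRoot ω 3) (c : MvPowerSeries σ k)
    {z : MvPowerSeries σ k} (hz : constantCoeff z = 0) :
    (3 : k)⁻¹ • ∑ i ∈ range 3, (1 + C (ω ^ i) * (c * z)) * (1 - C (ω ^ i) * z)⁻¹ =
      (1 + c * z ^ 3) * (1 - z ^ 3)⁻¹ := by
  have hW : 1 + C ω + C ω ^ 2 = (0 : MvPowerSeries σ k) := by
    simpa [sum_range_succ, add_assoc] using congrArg C (hω.geom_sum_eq_zero (by norm_num))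
  have hgeom (i : ℕ) :
      (1 - C ω ^ i * z)⁻¹ = (∑ j ∈ range 3, (C ω ^ i * z) ^ j) * (1 - z ^ 3)⁻¹ := by
    have hω3 : C ω ^ 3 = (1 : MvPowerSeries σ k) := by rw [← map_pow, hω.pow_eq_one, map_one]
    rw [inv_one_sub_eq_geom_sum_mul_inv (by simp [hz]) three_ne_zero, mul_pow, ← pow_mul,
      mul_comm i, pow_mul, hω3, one_pow, one_mul]
  have : NeZero (3 : k) := by exact_mod_cast hω.neZero'
  calc (3 : k)⁻¹ • ∑ i ∈ range 3, (1 + C (ω ^ i) * (c * z)) * (1 - C (ω ^ i) * z)⁻¹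
      = (3 : k)⁻¹ • ((∑ i ∈ range 3, (1 + C ω ^ i * (c * z)) *
          ∑ j ∈ range 3, (C ω ^ i * z) ^ j) * (1 - z ^ 3)⁻¹) := by
        simp only [map_pow, hgeom, sum_mul, mul_assoc]
    _ = (1 + c * z ^ 3) * (1 - z ^ 3)⁻¹ := by
        rw [cube_root_multisection hW, smul_eq_C_mul, ← mul_assoc, ← mul_assoc,
          ← map_ofNat C 3, ← map_mul, inv_mul_cancel₀ (NeZero.ne _), map_one, one_mul]

end MvPowerSeries

open MvPowerSeries in
/-- ℤ₃ averaging of the HWG of `n.min B₃` restricted to `G₂` gives the HWG of the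
sub-regular nilpotent orbit closure of `G₂`, as formal power series in `x, y, t`. -/
theorem z3averagingSubregG2 (ω : ℂ) (hω : IsPrimitiveRoot ω 3) :
    (3 : ℂ)⁻¹ • ∑ i ∈ Finset.range 3,
        ((1 + C (σ := Fin 3) (R := ℂ) (ω ^ i) * (X 0 * X 1 * (X 2) ^ 6)) *
          ((1 - X 0 * (X 2) ^ 2)⁻¹ * (1 - C (σ := Fin 3) (R := ℂ) (ω ^ i) * (X 1 * (X 2) ^ 2))⁻¹ *
            ((1 - (X 1) ^ 2 * (X 2) ^ 4)⁻¹ * (1 - (X 0) ^ 2 * (X 2) ^ 8)⁻¹)))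
      = (1 - (X 0 : MvPowerSeries (Fin 3) ℂ) ^ 2 * (X 1) ^ 6 * (X 2) ^ 20) *
          ((1 - X 0 * (X 2) ^ 2)⁻¹ * (1 - (X 1) ^ 2 * (X 2) ^ 4)⁻¹ *
            ((1 - (X 1) ^ 3 * (X 2) ^ 6)⁻¹ * (1 - (X 0) ^ 2 * (X 2) ^ 8)⁻¹ *
              (1 - X 0 * (X 1) ^ 3 * (X 2) ^ 10)⁻¹)) := by
  set D : MvPowerSeries (Fin 3) ℂ :=
    (1 - X 0 * X 2 ^ 2)⁻¹ * (1 - X 1 ^ 2 * X 2 ^ 4)⁻¹ * (1 - X 0 ^ 2 * X 2 ^ 8)⁻¹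
  set a : MvPowerSeries (Fin 3) ℂ := X 0 * X 1 ^ 3 * X 2 ^ 10
  have hsummand : ∀ i ∈ range 3,
      (1 + C (ω ^ i) * (X 0 * X 1 * X 2 ^ 6)) *
          ((1 - X 0 * X 2 ^ 2)⁻¹ * (1 - C (ω ^ i) * (X 1 * X 2 ^ 2))⁻¹ *
            ((1 - X 1 ^ 2 * X 2 ^ 4)⁻¹ * (1 - X 0 ^ 2 * X 2 ^ 8)⁻¹)) =
        D * ((1 + C (ω ^ i) * (X 0 * X 2 ^ 4 * (X 1 * X 2 ^ 2))) *
          (1 - C (ω ^ i) * (X 1 * X 2 ^ 2))⁻¹) :=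
    fun i _ => by ring
  have hz3 : (X 1 * X 2 ^ 2 : MvPowerSeries (Fin 3) ℂ) ^ 3 = X 1 ^ 3 * X 2 ^ 6 := by ring
  rw [sum_congr rfl hsummand, ← mul_sum, ← mul_smul_comm,
    cube_root_multisection_inv hω _ (by simp), hz3]
  have ha : (1 - a) * (1 - a)⁻¹ = 1 := MvPowerSeries.mul_inv_cancel _ (by simp [a])
  linear_combination -(D * (1 - X 1 ^ 3 * X 2 ^ 6)⁻¹ * (1 + a)) * ha
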